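/- If C has enough projectives, then for any additive F : C → D and any right exact G : C → D there is an isomorphism Nat(G, F) ≅ Nat(G, L₀F), natural in both variables; equivalently, L₀ is right adjoint to the inclusion of right exact functors into (C, D). -/

import Mathlib

open CategoryTheory CategoryTheory.Limits

universe v₁ v₂ u₁ u₂

variable {C : Type u₁} {D : Type u₂} [Category.{v₁} C] [Category.{v₂} D] [Abelian C] [Abelian D]

/-- `L` is a zeroth left derived functor of `F`, i.e. there is a canonical morphism `L ⟶ F`
which is an isomorphism on projectives, and for every projective presentation
`P₁ → P₀ → X → 0` the sequence `L(P₁) → L(P₀) → L(X) → 0` is exact (so that, via the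
isomorphisms `L(Pⱼ) ≅ F(Pⱼ)`, `L(X)` is the cokernel of `F(P₁) → F(P₀)`). -/
structure IsZerothLeftDerivedFunctor (F L : C ⥤ D) [F.Additive] [L.Additive] where
  counit : L ⟶ F
  isIso_counit_app_of_projective : ∀ (P : C) [Projective P], IsIso (counit.app P)
  isCokernel : ∀ {X P0 P1 : C} (p : P1 ⟶ P0) (π : P0 ⟶ X) [Projective P0] [Projective P1]
    [Epi π] (w : p ≫ π = 0), (ShortComplex.mk p π w).Exact →
    Nonempty (IsColimit (CokernelCofork.ofπ (L.map π)
      (by rw [← L.map_comp, w, L.map_zero])))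

/-- A functor is right exact if it sends short exact sequences `0 → A → B → C → 0`
to exact sequences `G(A) → G(B) → G(C) → 0`. -/
def IsRightExactFunctor (G : C ⥤ D) [G.Additive] : Prop :=
  ∀ S : ShortComplex C, S.ShortExact → Epi (S.map G).g ∧ (S.map G).Exact

/-! Since `ε : L ⟶ F` is invertible on projectives, a transformation `G ⟶ F` amounts to a family
`G(P) ⟶ L(P)` natural in projective `P`. Every `X` is a quotient `π : P ↠ X` of a projective, and
right exactness of `G` makes `G(ker π) ⟶ G(P) ↠ G(X)` a cokernel presentation, so such a family
extends uniquely to all of `C`: uniquely because `G(π)` is epi, and by descending along `G(π)`,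
which kills `G(ker π)` because `ker π` is itself covered by a projective. -/

lemma kernel_shortExact {A B : C} (e : A ⟶ B) [Epi e] :
    (ShortComplex.mk (kernel.ι e) e (kernel.condition e)).ShortExact :=
  ⟨ShortComplex.exact_of_f_is_kernel _ (kernelIsKernel e)⟩

omit [Abelian C] [Abelian D] in
lemma natTrans_ext_of_projective [EnoughProjectives C] {G H : C ⥤ D}
    (hG : ∀ X : C, Epi (G.map (Projective.π X))) {α β : G ⟶ H}
    (h : ∀ (P : C) [Projective P], α.app P = β.app P) : α = β := by
  ext X
  rw [← cancel_epi (G.map (Projective.π X)), α.naturality, β.naturality, h]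

omit [Abelian C] [Abelian D] in
lemma postcomp_injective_of_isIso_app_projective [EnoughProjectives C] {G L F : C ⥤ D}
    (hG : ∀ X : C, Epi (G.map (Projective.π X))) (ε : L ⟶ F)
    (hε : ∀ (P : C) [Projective P], IsIso (ε.app P)) :
    Function.Injective (fun α : G ⟶ L => α ≫ ε) := by
  intro α α' h
  refine natTrans_ext_of_projective hG fun P _ => ?_
  have := hε P
  rw [← cancel_mono (ε.app P)]
  exact congrArg (fun t : G ⟶ F => t.app P) h

namespace IsRightExactFunctor

variable {G : C ⥤ D} [G.Additive]

lemma epi_map (hG : IsRightExactFunctor G) {A B : C} (e : A ⟶ B) [Epi e] :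
    Epi (G.map e) :=
  (hG _ (kernel_shortExact e)).1

lemma exists_desc (hG : IsRightExactFunctor G) {A B : C} (e : A ⟶ B) [Epi e] {Y : D}
    (k : G.obj A ⟶ Y) (hk : G.map (kernel.ι e) ≫ k = 0) :
    ∃ l : G.obj B ⟶ Y, G.map e ≫ l = k := by
  obtain ⟨_, hexact⟩ := hG _ (kernel_shortExact e)
  exact ⟨hexact.desc k hk, hexact.g_desc k hk⟩

lemma exists_natTrans_extension [EnoughProjectives C] {L : C ⥤ D} [L.PreservesZeroMorphisms]
    (hG : IsRightExactFunctor G) (γ : ∀ (P : C) [Projective P], G.obj P ⟶ L.obj P)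
    (hγ : ∀ (P Q : C) [Projective P] [Projective Q] (f : P ⟶ Q),
      G.map f ≫ γ Q = γ P ≫ L.map f) :
    ∃ β : G ⟶ L, ∀ (P : C) [Projective P], β.app P = γ P := by
  have hcond : ∀ X : C, G.map (kernel.ι (Projective.π X)) ≫
      γ (Projective.over X) ≫ L.map (Projective.π X) = 0 := by
    intro X
    have := hG.epi_map (Projective.π (kernel (Projective.π X)))
    rw [← cancel_epi (G.map (Projective.π _)), comp_zero, ← G.map_comp_assoc, reassoc_of% hγ,
      ← L.map_comp, Category.assoc, kernel.condition, comp_zero, L.map_zero, comp_zero]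
  choose β hβ using fun X => hG.exists_desc (Projective.π X) _ (hcond X)
  have hnat : ∀ {X Y : C} (f : X ⟶ Y), G.map f ≫ β Y = β X ≫ L.map f := by
    intro X Y f
    have := hG.epi_map (Projective.π X)
    have hlift := Projective.factorThru_comp (Projective.π X ≫ f) (Projective.π Y)
    rw [← cancel_epi (G.map (Projective.π X)), reassoc_of% hβ, ← G.map_comp_assoc, ← hlift,
      G.map_comp_assoc, hβ, reassoc_of% hγ, ← L.map_comp, hlift, L.map_comp]
  refine ⟨{ app := β, naturality := fun _ _ f => hnat f }, fun P _ => ?_⟩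
  have := hG.epi_map (Projective.π P)
  rw [← cancel_epi (G.map (Projective.π P))]
  exact (hβ P).trans (hγ _ _ _).symm

lemma postcomp_surjective_of_isIso_app_projective [EnoughProjectives C] {L F : C ⥤ D}
    [L.PreservesZeroMorphisms] (hG : IsRightExactFunctor G) (ε : L ⟶ F)
    (hε : ∀ (P : C) [Projective P], IsIso (ε.app P)) :
    Function.Surjective (fun α : G ⟶ L => α ≫ ε) := by
  have := hε
  intro α
  obtain ⟨β, hβ⟩ := hG.exists_natTrans_extension (fun P _ => α.app P ≫ inv (ε.app P))
    fun P Q _ _ f => by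
      rw [α.naturality_assoc, Category.assoc]
      congr 1
      rw [IsIso.comp_inv_eq, Category.assoc, IsIso.eq_inv_comp, ε.naturality]
  exact ⟨β, natTrans_ext_of_projective (fun _ => hG.epi_map _) fun P _ => by simp [hβ]⟩

end IsRightExactFunctor

/-- If `C` has enough projectives, then for any additive `F : C ⥤ D` and any
right exact `G : C ⥤ D`, postcomposition with the canonical morphism `L₀F ⟶ F` gives a
bijection `Nat(G, L₀F) ≅ Nat(G, F)`; i.e. `L₀` is right adjoint to the inclusion of right
exact functors. -/
theorem zerothLeftDerived_adjunction_bijection [EnoughProjectives C]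
    (F L G : C ⥤ D) [F.Additive] [L.Additive] [G.Additive]
    (hL : IsZerothLeftDerivedFunctor F L)
    (hG : IsRightExactFunctor G) :
    Function.Bijective (fun (α : G ⟶ L) => α ≫ hL.counit) :=
  ⟨postcomp_injective_of_isIso_app_projective (fun _ => hG.epi_map _) hL.counit
      hL.isIso_counit_app_of_projective,
    hG.postcomp_surjective_of_isIso_app_projective hL.counit hL.isIso_counit_app_of_projective⟩
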